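/- arXiv:1901.00838 — 4 statements merged into one kernel-verified Lean document; each statement's English description precedes it below -/
import Mathlib

section
/- Let a, b, c be real numbers with a > 0, b > 0, b < a, and c^2 > a*b, and let M be the 2×2 real matrix !![a, c; -c, -b]. Then every eigenvalue of M (i.e., every element of the spectrum of M viewed as a matrix over ℂ) has strictly positive real part. -/
open Matrix

/-!
The eigenvalues of a real 2×2 matrix are the roots of `z² - (tr M) z + det M`. Here
`tr M = a - b > 0` and `det M = c² - a b > 0`. A root `z` of such a quadratic is either real,
and then `t z = z² + d > 0`, or non-real, and then the imaginary part of the equation forces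
`2 re z = t > 0`.
-/

theorem Complex.re_pos_of_sq_sub_mul_add_eq_zero {t d : ℝ} (ht : 0 < t) (hd : 0 < d) {z : ℂ}
    (hz : z ^ 2 - t * z + d = 0) : 0 < z.re := by
  have hre : z.re ^ 2 - z.im ^ 2 - t * z.re + d = 0 := by
    simpa [sq] using congrArg Complex.re hz
  have him : z.im * (2 * z.re - t) = 0 := by
    have := congrArg Complex.im hz
    simp only [sq, sub_im, add_im, mul_im, ofReal_re, ofReal_im, zero_im] at this
    linear_combination this
  rcases mul_eq_zero.mp him with hreal | hsum
  · nlinarith [sq_nonneg z.re]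
  · linarith

theorem Matrix.re_pos_of_mem_spectrum_map_ofReal {A : Matrix (Fin 2) (Fin 2) ℝ}
    (htr : 0 < A.trace) (hdet : 0 < A.det) :
    ∀ μ ∈ spectrum ℂ (A.map Complex.ofReal), 0 < μ.re := by
  intro μ hμ
  rw [mem_spectrum_iff_isRoot_charpoly, charpoly_fin_two] at hμ
  have htrace : (A.map Complex.ofReal).trace = A.trace := (AddMonoidHom.map_trace Complex.ofRealHom A).symm
  have hdet' : (A.map Complex.ofReal).det = A.det := (RingHom.map_det Complex.ofRealHom A).symm
  simp only [Polynomial.IsRoot, Polynomial.eval_add, Polynomial.eval_sub, Polynomial.eval_pow,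
    Polynomial.eval_mul, Polynomial.eval_X, Polynomial.eval_C, htrace, hdet'] at hμ
  exact Complex.re_pos_of_sq_sub_mul_add_eq_zero htr hdet hμ

theorem stmt_0_general (a b c : ℝ) (hba : b < a) (hc : c ^ 2 > a * b) :
    ∀ μ ∈ spectrum ℂ ((!![a, c; -c, -b] : Matrix (Fin 2) (Fin 2) ℝ).map Complex.ofReal),
      0 < μ.re := by
  apply re_pos_of_mem_spectrum_map_ofReal
  · rw [trace_fin_two_of]
    linarith
  · rw [det_fin_two_of]
    linarith

/-- Example 1 of the paper: a matrix with the sign structure of the Jacobian of the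
gradient dynamics at a non-Nash critical point of a zero-sum game can be Hurwitz. -/
theorem stmt_0 (a b c : ℝ) (ha : 0 < a) (hb : 0 < b) (hba : b < a) (hc : c ^ 2 > a * b) :
    ∀ μ ∈ spectrum ℂ ((!![a, c; -c, -b] : Matrix (Fin 2) (Fin 2) ℝ).map Complex.ofReal),
      0 < μ.re :=
  stmt_0_general a b c hba hc
end

section
/- Under the stated assumptions on ω, J, λ and h, let z* ∈ ℝ^d satisfy ω(z*) = 0 and suppose J(z*) is invertible. Then h is differentiable at z* and the Jacobian matrix of h at z* equals (1/2)(J(z*) + Jᵀ(z*)); in particular it is a symmetric matrix. -/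
/-!
Write `h = ½ (ω + A ω)` with `A = Jᵀ (JᵀJ + λ I)⁻¹ Jᵀ`. Because `ω z* = 0`, the product `A ω` is
differentiable at `z*` with derivative `A(z*) J(z*)` as soon as `A` is merely continuous there.
Since `λ z* = 0`, `A(z*) J(z*) = Jᵀ (JᵀJ)⁻¹ JᵀJ = Jᵀ`.
-/

open Matrix Asymptotics Topology

theorem HasFDerivAt.clm_apply_of_continuousAt_of_eq_zero {𝕜 E F G : Type*}
    [NontriviallyNormedField 𝕜] [NormedAddCommGroup E] [NormedSpace 𝕜 E]
    [NormedAddCommGroup F] [NormedSpace 𝕜 F] [NormedAddCommGroup G] [NormedSpace 𝕜 G]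
    {c : E → F →L[𝕜] G} {u : E → F} {u' : E →L[𝕜] F} {x : E}
    (hc : ContinuousAt c x) (hu : HasFDerivAt u u' x) (hx : u x = 0) :
    HasFDerivAt (fun z => c z (u z)) ((c x).comp u') x := by
  have hco : (fun z => ‖c z - c x‖) =o[𝓝 x] (fun _ => (1 : ℝ)) :=
    (isLittleO_one_iff ℝ).mpr (tendsto_iff_norm_sub_tendsto_zero.mp hc)
  have huO : (fun z => ‖u z‖) =O[𝓝 x] (fun z => ‖z - x‖) := by
    simpa [hx] using hu.isBigO_sub.norm_norm
  have hrem : HasFDerivAt (fun z => (c z - c x) (u z)) (0 : E →L[𝕜] G) x := by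
    refine HasFDerivAt.of_isLittleO ?_
    simp only [hx, map_zero, sub_zero, _root_.zero_apply]
    refine (IsBigO.of_norm_le fun z => (c z - c x).le_opNorm (u z)).trans_isLittleO ?_
    simpa using hco.mul_isBigO huO
  convert ((c x).hasFDerivAt.comp x hu).add hrem using 1
  · ext z
    simp
  · simp

section

variable {𝕜 m n : Type*} [NontriviallyNormedField 𝕜] [CompleteSpace 𝕜]
  [Fintype m] [Fintype n] [DecidableEq n]

theorem Matrix.continuous_toContinuousLinearMap_mulVecLin :
    Continuous fun M : Matrix m n 𝕜 => LinearMap.toContinuousLinearMap M.mulVecLin :=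
  (LinearMap.toContinuousLinearMap.toLinearMap ∘ₗ
    (toLin' : Matrix m n 𝕜 ≃ₗ[𝕜] _).toLinearMap).continuous_of_finiteDimensional

theorem continuous_of_hasFDerivAt_mulVecLin {f : (n → 𝕜) → m → 𝕜} {J : (n → 𝕜) → Matrix m n 𝕜}
    (hf : ContDiff 𝕜 1 f)
    (hJ : ∀ z, HasFDerivAt f (LinearMap.toContinuousLinearMap (J z).mulVecLin) z) :
    Continuous J := by
  let e : Matrix m n 𝕜 ≃L[𝕜] (n → 𝕜) →L[𝕜] m → 𝕜 :=
    (toLin'.trans LinearMap.toContinuousLinearMap).toContinuousLinearEquiv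
  have hJ_eq : J = e.symm ∘ fderiv 𝕜 f := by
    funext z
    rw [Function.comp_apply, (hJ z).fderiv, ContinuousLinearEquiv.eq_symm_apply]
    rfl
  rw [hJ_eq]
  exact e.symm.continuous.comp (hf.continuous_fderiv one_ne_zero)

end

theorem continuousAt_matrix_inv_of_isUnit {𝕜 n : Type*} [NontriviallyNormedField 𝕜]
    [Fintype n] [DecidableEq n] {A : Matrix n n 𝕜} (hA : IsUnit A) : ContinuousAt Inv.inv A := by
  refine continuousAt_matrix_inv A ?_
  rw [Ring.inverse_eq_inv']
  exact continuousAt_inv₀ ((isUnit_iff_isUnit_det A).mp hA).ne_zero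

theorem Matrix.transpose_mul_inv_mul_transpose_mul {𝕜 n : Type*} [Field 𝕜] [Fintype n]
    [DecidableEq n] {B : Matrix n n 𝕜} (hB : IsUnit (Bᵀ * B)) : Bᵀ * (Bᵀ * B)⁻¹ * Bᵀ * B = Bᵀ := by
  rw [mul_assoc, mul_assoc, nonsing_inv_mul _ ((isUnit_iff_isUnit_det _).mp hB), mul_one]

theorem stmt_3_general {d : ℕ}
    (ω : (Fin d → ℝ) → (Fin d → ℝ))
    (J : (Fin d → ℝ) → Matrix (Fin d) (Fin d) ℝ)
    (lam : (Fin d → ℝ) → ℝ)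
    (hω : ContDiff ℝ 2 ω)
    (hJ : ∀ z, HasFDerivAt ω (LinearMap.toContinuousLinearMap (Matrix.mulVecLin (J z))) z)
    (hlamC1 : ContDiff ℝ 1 lam)
    (hlam_zero : ∀ z, lam z = 0 ↔ ω z = 0)
    (hinv : ∀ z, IsUnit ((J z)ᵀ * J z + lam z • (1 : Matrix (Fin d) (Fin d) ℝ)))
    (h : (Fin d → ℝ) → (Fin d → ℝ))
    (hdef : ∀ z, h z = (1 / 2 : ℝ) •
      (ω z + ((J z)ᵀ).mulVec ((((J z)ᵀ * J z + lam z • (1 : Matrix (Fin d) (Fin d) ℝ))⁻¹).mulVec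
        (((J z)ᵀ).mulVec (ω z)))))
    (zs : Fin d → ℝ)
    (hcrit : ω zs = 0) :
    HasFDerivAt h
      (LinearMap.toContinuousLinearMap
        (Matrix.mulVecLin ((1 / 2 : ℝ) • (J zs + (J zs)ᵀ)))) zs ∧
    ((1 / 2 : ℝ) • (J zs + (J zs)ᵀ)).IsSymm := by
  set M : (Fin d → ℝ) → Matrix (Fin d) (Fin d) ℝ := fun z => (J z)ᵀ * J z + lam z • 1
  set A : (Fin d → ℝ) → Matrix (Fin d) (Fin d) ℝ := fun z => (J z)ᵀ * (M z)⁻¹ * (J z)ᵀ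
  have hJc : Continuous J := continuous_of_hasFDerivAt_mulVecLin (hω.of_le (by norm_num)) hJ
  have hMc : Continuous M :=
    (hJc.matrix_transpose.matrix_mul hJc).add (hlamC1.continuous.smul continuous_const)
  have hAc : ContinuousAt A zs :=
    (hJc.matrix_transpose.continuousAt.mul
      ((continuousAt_matrix_inv_of_isUnit (A := M zs) (hinv zs)).comp hMc.continuousAt)).mul
      hJc.matrix_transpose.continuousAt
  have hMzs : M zs = (J zs)ᵀ * J zs := by simp [M, (hlam_zero zs).mpr hcrit]
  have hAJ : A zs * J zs = (J zs)ᵀ := by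
    simp only [A, hMzs]
    exact transpose_mul_inv_mul_transpose_mul (hMzs ▸ hinv zs)
  have hh : h = fun z =>
      (1 / 2 : ℝ) • (ω z + LinearMap.toContinuousLinearMap (A z).mulVecLin (ω z)) := by
    funext z
    simp only [hdef, A, M, LinearMap.coe_toContinuousLinearMap', mulVecLin_apply, mulVec_mulVec,
      mul_assoc]
  have hadj := HasFDerivAt.clm_apply_of_continuousAt_of_eq_zero
    (continuous_toContinuousLinearMap_mulVecLin.continuousAt.comp hAc) (hJ zs) hcrit
  refine ⟨?_, (isSymm_add_transpose_self _).smul _⟩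
  rw [hh]
  refine (((hJ zs).add hadj).const_smul (1 / 2 : ℝ)).congr_fderiv ?_
  ext v i
  simp [mulVec_mulVec, hAJ, mulVec_transpose]

/-- Jacobian computation in the proof of Theorem 1: at a critical point `z*` of `ω` where
`J(z*)` is invertible, the Jacobian of the adjusted vector field `h` is the symmetric matrix
`(1/2)(J(z*) + J(z*)ᵀ)`. -/
theorem stmt_3 {d : ℕ}
    (ω : (Fin d → ℝ) → (Fin d → ℝ))
    (J : (Fin d → ℝ) → Matrix (Fin d) (Fin d) ℝ)
    (lam : (Fin d → ℝ) → ℝ)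
    (hω : ContDiff ℝ 2 ω)
    (hJ : ∀ z, HasFDerivAt ω (LinearMap.toContinuousLinearMap (Matrix.mulVecLin (J z))) z)
    (hlamC1 : ContDiff ℝ 1 lam)
    (hlam_nonneg : ∀ z, 0 ≤ lam z)
    (hlam_zero : ∀ z, lam z = 0 ↔ ω z = 0)
    (hinv : ∀ z, IsUnit ((J z)ᵀ * J z + lam z • (1 : Matrix (Fin d) (Fin d) ℝ)))
    (h : (Fin d → ℝ) → (Fin d → ℝ))
    (hdef : ∀ z, h z = (1 / 2 : ℝ) •
      (ω z + ((J z)ᵀ).mulVec ((((J z)ᵀ * J z + lam z • (1 : Matrix (Fin d) (Fin d) ℝ))⁻¹).mulVec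
        (((J z)ᵀ).mulVec (ω z)))))
    (zs : Fin d → ℝ)
    (hcrit : ω zs = 0)
    (hJinv : IsUnit (J zs)) :
    HasFDerivAt h
      (LinearMap.toContinuousLinearMap
        (Matrix.mulVecLin ((1 / 2 : ℝ) • (J zs + (J zs)ᵀ)))) zs ∧
    ((1 / 2 : ℝ) • (J zs + (J zs)ᵀ)).IsSymm :=
  stmt_3_general ω J lam hω hJ hlamC1 hlam_zero hinv h hdef zs hcrit
end

section
/- Let f : (ℝ^{d_x}) × (ℝ^{d_y}) → ℝ be three times continuously differentiable, define ω(x,y) = (∇ₓ f(x,y), -∇_y f(x,y)) (the simultaneous-gradient vector field of the zero-sum game in which the x-player minimizes f and the y-player maximizes f), let J(z) be the Jacobian matrix of ω at z, let λ : ℝ^{d_x+d_y} → ℝ be continuously differentiable with 0 ≤ λ(z) for all z and λ(z) = 0 ⟺ ω(z) = 0, assume Jᵀ(z)J(z) + λ(z)I is invertible for every z, and define h(z) = (1/2)(ω(z) + Jᵀ(z)(Jᵀ(z)J(z) + λ(z)I)⁻¹ Jᵀ(z) ω(z)). Let z* = (x*, y*) satisfy ω(z*) = 0 and suppose J(z*)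 is invertible. Then: (i) every eigenvalue of the Jacobian matrix of h at z* is real; and (ii) every eigenvalue of the Jacobian matrix of h at z* is strictly positive if and only if z* is a differential Nash equilibrium of the game, i.e., the Hessian of x ↦ f(x, y*) at x* is positive definite and the Hessian of y ↦ f(x*, y) at y* is negative definite. -/
open Matrix

/-- The Jacobian matrix (w.r.t. the standard basis) of a map `h : ℝ^ι → ℝ^ι` at `z`. -/
noncomputable def jacobianMatrix {ι : Type*} [Fintype ι] [DecidableEq ι]
    (h : (ι → ℝ) → (ι → ℝ)) (z : ι → ℝ) : Matrix ι ι ℝ :=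
  LinearMap.toMatrix' (fderiv ℝ h z).toLinearMap

/-!
At a zero `z*` of `ω`, the factor `B = Jᵀ(JᵀJ + λI)⁻¹Jᵀ` of `h = (ω + Bω)/2` is only ever
multiplied by `ω(z*) = 0`, so its derivative never enters: continuity of `B` at `z*` suffices, and
`Dh(z*) = (J + B J)/2`. Since `λ(z*) = 0` and `J(z*)` is invertible, `B J = Jᵀ(JᵀJ)⁻¹JᵀJ = Jᵀ`,
so `Dh(z*)` is the symmetric part `(J + Jᵀ)/2`. As `ω` is the gradient of `f` with the sign of its
`y`-block flipped, this symmetric part is `blockdiag(D²ₓₓ f, -D²_yy f)`: a real symmetric matrix,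
whose eigenvalues are therefore real, and positive iff both diagonal blocks are positive definite.
-/

open Asymptotics Topology

section Calculus

variable {E F G : Type*} [NormedAddCommGroup E] [NormedSpace ℝ E]
    [NormedAddCommGroup F] [NormedSpace ℝ F] [NormedAddCommGroup G] [NormedSpace ℝ G]

theorem HasFDerivAt.clm_apply_of_eq_zero {c : E → F →L[ℝ] G} {u : E → F} {L : E →L[ℝ] F}
    {z : E} (hc : ContinuousAt c z) (hu : HasFDerivAt u L z) (h0 : u z = 0) :
    HasFDerivAt (fun x => c x (u x)) ((c z).comp L) z := by
  have hc' : (fun x => ‖c x - c z‖) =o[𝓝 z] fun _ => (1 : ℝ) :=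
    (isLittleO_one_iff ℝ).2 (by simpa using (tendsto_sub_nhds_zero_iff.2 hc).norm)
  have hu' : (fun x => ‖u x‖) =O[𝓝 z] fun x => ‖x - z‖ := by
    simpa [h0] using hu.isBigO_sub.norm_norm
  have hrem : (fun x => (c x - c z) (u x)) =o[𝓝 z] fun x => x - z := by
    refine IsBigO.trans_isLittleO (g := fun x => ‖c x - c z‖ * ‖u x‖) ?_ ?_
    · exact isBigO_of_le _ fun x => by simpa using (c x - c z).le_opNorm (u x)
    · exact IsLittleO.of_norm_right (by simpa using hc'.mul_isBigO hu')
  have hrem' : HasFDerivAt (fun x => (c x - c z) (u x)) (0 : E →L[ℝ] G) z := by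
    simpa [hasFDerivAt_iff_isLittleO, h0] using hrem
  convert ((c z).hasFDerivAt.comp z hu).add hrem' using 1
  · ext x; simp
  · simp

theorem HasFDerivAt.mulVec_of_eq_zero {m n : Type*} [Fintype m] [Fintype n] [DecidableEq n]
    {B : E → Matrix m n ℝ} {u : E → n → ℝ} {L : E →L[ℝ] n → ℝ} {z : E}
    (hB : ContinuousAt B z) (hu : HasFDerivAt u L z) (h0 : u z = 0) :
    HasFDerivAt (fun x => B x *ᵥ u x) ((B z).mulVecLin.toContinuousLinearMap.comp L) z :=
  let Φ : Matrix m n ℝ →ₗ[ℝ] (n → ℝ) →L[ℝ] (m → ℝ) :=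
    LinearMap.toContinuousLinearMap.toLinearMap ∘ₗ Matrix.toLin'.toLinearMap
  HasFDerivAt.clm_apply_of_eq_zero (Φ.continuous_of_finiteDimensional.continuousAt.comp hB) hu h0

end Calculus

namespace Matrix

theorem isHermitian_half_smul_add_transpose {ι : Type*} (K : Matrix ι ι ℝ) :
    ((1 / 2 : ℝ) • (K + Kᵀ)).IsHermitian :=
  isHermitian_iff_isSymm.2 ((isSymm_add_transpose_self K).smul _)

variable {ι : Type*} [Fintype ι] [DecidableEq ι]

theorem IsHermitian.spectrum_map_ofReal {A : Matrix ι ι ℝ} (hA : A.IsHermitian) :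
    spectrum ℂ (A.map Complex.ofReal) = Complex.ofReal '' Set.range hA.eigenvalues := by
  ext μ
  have hroots : (A.map Complex.ofRealHom).charpoly.roots =
      Multiset.map (Complex.ofReal ∘ hA.eigenvalues) Finset.univ.val := by
    rw [charpoly_map, hA.splits_charpoly.roots_map, hA.roots_charpoly_eq_eigenvalues,
      Multiset.map_map]
    rfl
  rw [show A.map Complex.ofReal = A.map Complex.ofRealHom from rfl,
    mem_spectrum_iff_isRoot_charpoly, ← Polynomial.mem_roots (charpoly_monic _).ne_zero, hroots]
  simp

theorem IsHermitian.im_eq_zero_of_mem_spectrum_map_ofReal {A : Matrix ι ι ℝ}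
    (hA : A.IsHermitian) : ∀ μ ∈ spectrum ℂ (A.map Complex.ofReal), μ.im = 0 := by
  rintro μ hμ
  obtain ⟨_, _, rfl⟩ := hA.spectrum_map_ofReal ▸ hμ
  exact Complex.ofReal_im _

theorem IsHermitian.forall_spectrum_map_ofReal_re_pos_iff {A : Matrix ι ι ℝ}
    (hA : A.IsHermitian) :
    (∀ μ ∈ spectrum ℂ (A.map Complex.ofReal), 0 < μ.re) ↔ A.PosDef := by
  simp [hA.spectrum_map_ofReal, hA.posDef_iff_eigenvalues_pos]

theorem posDef_fromBlocks_zero_iff {m n : Type*} [Fintype m] [Fintype n] [DecidableEq m]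
    [DecidableEq n] {P : Matrix m m ℝ} {N : Matrix n n ℝ} :
    (fromBlocks P 0 0 N).PosDef ↔ P.PosDef ∧ N.PosDef := by
  refine ⟨fun h => ⟨?_, ?_⟩, fun ⟨hP, hN⟩ => ?_⟩
  · exact h.submatrix Sum.inl_injective
  · exact h.submatrix Sum.inr_injective
  · have hsemi : (fromBlocks P 0 0 N).PosSemidef := by
      have := hP.isUnit.invertible
      simpa using (PosDef.fromBlocks₁₁ (0 : Matrix m n ℝ) N hP).2 (by simpa using hN.posSemidef)
    refine hsemi.posDef_iff_det_ne_zero.2 ?_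
    rw [det_fromBlocks_zero₂₁]
    exact mul_ne_zero hP.det_pos.ne' hN.det_pos.ne'

end Matrix

section Jacobian

variable {ι : Type*} [Fintype ι] [DecidableEq ι]

theorem jacobianMatrix_eq_of_hasFDerivAt {h : (ι → ℝ) → ι → ℝ} {A : Matrix ι ι ℝ} {z : ι → ℝ}
    (hA : HasFDerivAt h A.mulVecLin.toContinuousLinearMap z) : jacobianMatrix h z = A := by
  rw [jacobianMatrix, hA.fderiv]
  exact LinearMap.toMatrix'_toLin' A

theorem jacobianMatrix_apply {ω : (ι → ℝ) → ι → ℝ} {z : ι → ℝ} (hω : DifferentiableAt ℝ ω z)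
    (i j : ι) : jacobianMatrix ω z i j = fderiv ℝ (fun x => ω x i) z (Pi.single j 1) := by
  simp [jacobianMatrix, fderiv_apply hω]

theorem continuous_jacobianMatrix {h : (ι → ℝ) → ι → ℝ} (hh : ContDiff ℝ 1 h) :
    Continuous (jacobianMatrix h) :=
  let Φ : ((ι → ℝ) →L[ℝ] ι → ℝ) →ₗ[ℝ] Matrix ι ι ℝ :=
    LinearMap.toMatrix'.toLinearMap ∘ₗ ContinuousLinearMap.coeLM ℝ
  Φ.continuous_of_finiteDimensional.comp (hh.continuous_fderiv one_ne_zero)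

noncomputable def symmetrizedField (ω : (ι → ℝ) → ι → ℝ) (J : (ι → ℝ) → Matrix ι ι ℝ)
    (lam : (ι → ℝ) → ℝ) (z : ι → ℝ) : ι → ℝ :=
  (1 / 2 : ℝ) • (ω z + (J z)ᵀ *ᵥ (((J z)ᵀ * J z + lam z • 1)⁻¹ *ᵥ ((J z)ᵀ *ᵥ ω z)))

theorem hasFDerivAt_symmetrizedField {ω : (ι → ℝ) → ι → ℝ} {J : (ι → ℝ) → Matrix ι ι ℝ}
    {lam : (ι → ℝ) → ℝ} {z : ι → ℝ} (hω : HasFDerivAt ω (J z).mulVecLin.toContinuousLinearMap z)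
    (hJ : ContinuousAt J z) (hlam : ContinuousAt lam z) (hωz : ω z = 0) (hlamz : lam z = 0)
    (hJz : IsUnit (J z)) :
    HasFDerivAt (symmetrizedField ω J lam)
      ((1 / 2 : ℝ) • (J z + (J z)ᵀ)).mulVecLin.toContinuousLinearMap z := by
  set M := fun x => (J x)ᵀ * J x + lam x • (1 : Matrix ι ι ℝ)
  set B := fun x => (J x)ᵀ * (M x)⁻¹ * (J x)ᵀ
  have hJT : ContinuousAt (fun x => (J x)ᵀ) z :=
    continuous_id.matrix_transpose.continuousAt.comp hJ
  have hMz : M z = (J z)ᵀ * J z := by simp [M, hlamz]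
  have hdet : IsUnit (M z).det := by
    rw [hMz, det_mul, det_transpose, IsUnit.mul_iff, and_self, ← isUnit_iff_isUnit_det]
    exact hJz
  have hMinv : ContinuousAt (fun x => (M x)⁻¹) z := by
    refine (continuousAt_matrix_inv _ ?_).comp ((hJT.mul hJ).add (hlam.smul continuousAt_const))
    simpa [Ring.inverse_eq_inv'] using continuousAt_inv₀ hdet.ne_zero
  have hB : ContinuousAt B z := (hJT.mul hMinv).mul hJT
  have hBJ : B z * J z = (J z)ᵀ := by
    simp only [B, Matrix.mul_assoc]
    rw [← hMz, nonsing_inv_mul _ hdet, Matrix.mul_one]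
  have hfield : symmetrizedField ω J lam = fun x => (1 / 2 : ℝ) • (ω x + B x *ᵥ ω x) := by
    funext x
    simp only [symmetrizedField, B, M, mulVec_mulVec, Matrix.mul_assoc]
  rw [hfield]
  refine ((hω.add (hω.mulVec_of_eq_zero hB hωz)).const_smul (1 / 2 : ℝ)).congr_fderiv ?_
  ext v i
  simp [← hBJ, mulVec_mulVec]

noncomputable def hessianMatrix (f : (ι → ℝ) → ℝ) (z : ι → ℝ) : Matrix ι ι ℝ :=
  of fun i j => fderiv ℝ (fun x => fderiv ℝ f x (Pi.single j 1)) z (Pi.single i 1)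

theorem isSymm_hessianMatrix {f : (ι → ℝ) → ℝ} {z : ι → ℝ} (hf : ContDiffAt ℝ 2 f z) :
    (hessianMatrix f z).IsSymm := by
  have hD : DifferentiableAt ℝ (fderiv ℝ f) z :=
    (hf.fderiv_right (m := 1) le_rfl).differentiableAt one_ne_zero
  have happly : ∀ i j,
      hessianMatrix f z i j = fderiv ℝ (fderiv ℝ f) z (Pi.single i 1) (Pi.single j 1) :=
    fun i j => by simp [hessianMatrix, fderiv_clm_apply hD (differentiableAt_const _)]
  ext i j
  rw [transpose_apply, happly, happly, hf.isSymmSndFDerivAt (by simp)]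

end Jacobian

section Game

variable {m n : Type*} [Fintype m] [Fintype n] [DecidableEq m] [DecidableEq n]

def IsSimultaneousGradient (f : (m ⊕ n → ℝ) → ℝ) (ω : (m ⊕ n → ℝ) → m ⊕ n → ℝ) : Prop :=
  ∀ z, (∀ i : m, ω z (Sum.inl i) = fderiv ℝ f z (Pi.single (Sum.inl i) 1)) ∧
    (∀ j : n, ω z (Sum.inr j) = -(fderiv ℝ f z (Pi.single (Sum.inr j) 1)))

namespace IsSimultaneousGradient

variable {f : (m ⊕ n → ℝ) → ℝ} {ω : (m ⊕ n → ℝ) → m ⊕ n → ℝ}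

theorem contDiff {k : WithTop ℕ∞} (hω : IsSimultaneousGradient f ω)
    (hf : ContDiff ℝ (k + 1) f) :
    ContDiff ℝ k ω := by
  have hDf : ContDiff ℝ k (fderiv ℝ f) := hf.fderiv_right le_rfl
  refine contDiff_pi.2 fun i => ?_
  rcases i with i | j
  · simpa only [fun z => (hω z).1 i] using hDf.clm_apply contDiff_const
  · simpa only [fun z => (hω z).2 j] using (hDf.clm_apply contDiff_const).neg

theorem symm_part_jacobianMatrix {z : m ⊕ n → ℝ} (hω : IsSimultaneousGradient f ω)
    (hωz : DifferentiableAt ℝ ω z) (hH : (hessianMatrix f z).IsSymm) :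
    (1 / 2 : ℝ) • (jacobianMatrix ω z + (jacobianMatrix ω z)ᵀ) =
      fromBlocks (hessianMatrix f z).toBlocks₁₁ 0 0 (-(hessianMatrix f z).toBlocks₂₂) := by
  set H := hessianMatrix f z
  have hinl : ∀ i j, jacobianMatrix ω z (Sum.inl i) j = H j (Sum.inl i) := by
    intro i j
    simp only [jacobianMatrix_apply hωz, fun x => (hω x).1 i, H, hessianMatrix, of_apply]
  have hinr : ∀ i j, jacobianMatrix ω z (Sum.inr i) j = -H j (Sum.inr i) := by
    intro i j
    simp only [jacobianMatrix_apply hωz, fun x => (hω x).2 i, fderiv_fun_neg, H, hessianMatrix,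
      of_apply, _root_.neg_apply]
  ext (i | i) (j | j) <;>
    simp only [Matrix.smul_apply, Matrix.add_apply, transpose_apply, hinl, hinr,
      fromBlocks_apply₁₁, fromBlocks_apply₁₂, fromBlocks_apply₂₁, fromBlocks_apply₂₂, toBlocks₁₁,
      toBlocks₂₂, Matrix.zero_apply, Matrix.neg_apply, of_apply, smul_eq_mul, hH.apply] <;>
    ring

end IsSimultaneousGradient

end Game

theorem stmt_4_general {dx dy : ℕ}
    (f : ((Fin dx ⊕ Fin dy) → ℝ) → ℝ)
    (hf : ContDiff ℝ 3 f)
    (ω : ((Fin dx ⊕ Fin dy) → ℝ) → ((Fin dx ⊕ Fin dy) → ℝ))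
    (hω : ∀ z, (∀ i : Fin dx, ω z (Sum.inl i) = fderiv ℝ f z (Pi.single (Sum.inl i) 1)) ∧
               (∀ j : Fin dy, ω z (Sum.inr j) = -(fderiv ℝ f z (Pi.single (Sum.inr j) 1))))
    (J : ((Fin dx ⊕ Fin dy) → ℝ) → Matrix (Fin dx ⊕ Fin dy) (Fin dx ⊕ Fin dy) ℝ)
    (hJ : ∀ z, HasFDerivAt ω (LinearMap.toContinuousLinearMap (Matrix.mulVecLin (J z))) z)
    (lam : ((Fin dx ⊕ Fin dy) → ℝ) → ℝ)
    (hlamC1 : ContDiff ℝ 1 lam)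
    (hlam_zero : ∀ z, lam z = 0 ↔ ω z = 0)
    (h : ((Fin dx ⊕ Fin dy) → ℝ) → ((Fin dx ⊕ Fin dy) → ℝ))
    (hdef : ∀ z, h z = (1 / 2 : ℝ) •
      (ω z + ((J z)ᵀ).mulVec ((((J z)ᵀ * J z +
        lam z • (1 : Matrix (Fin dx ⊕ Fin dy) (Fin dx ⊕ Fin dy) ℝ))⁻¹).mulVec
        (((J z)ᵀ).mulVec (ω z)))))
    (zs : (Fin dx ⊕ Fin dy) → ℝ)
    (hcrit : ω zs = 0)
    (hJinv : IsUnit (J zs)) :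
    DifferentiableAt ℝ h zs ∧
    (∀ μ ∈ spectrum ℂ ((jacobianMatrix h zs).map Complex.ofReal), μ.im = 0) ∧
    ((∀ μ ∈ spectrum ℂ ((jacobianMatrix h zs).map Complex.ofReal), 0 < μ.re) ↔
      (Matrix.PosDef (Matrix.of fun i j : Fin dx =>
          fderiv ℝ (fun z => fderiv ℝ f z (Pi.single (Sum.inl j) 1)) zs
            (Pi.single (Sum.inl i) 1)) ∧
       Matrix.PosDef (-(Matrix.of fun i j : Fin dy =>
          fderiv ℝ (fun z => fderiv ℝ f z (Pi.single (Sum.inr j) 1)) zs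
            (Pi.single (Sum.inr i) 1))))) := by
  have hgrad : IsSimultaneousGradient f ω := hω
  have hf2 : ContDiff ℝ 2 f := hf.of_le (by norm_num)
  have hJ_eq : J = jacobianMatrix ω :=
    funext fun z => (jacobianMatrix_eq_of_hasFDerivAt (hJ z)).symm
  have hJc : Continuous J := hJ_eq ▸ continuous_jacobianMatrix (hgrad.contDiff (k := 1) hf2)
  have hh : HasFDerivAt h ((1 / 2 : ℝ) • (J zs + (J zs)ᵀ)).mulVecLin.toContinuousLinearMap zs :=
    (funext hdef : h = symmetrizedField ω J lam) ▸ hasFDerivAt_symmetrizedField (hJ zs)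
      hJc.continuousAt hlamC1.continuous.continuousAt hcrit ((hlam_zero zs).2 hcrit) hJinv
  have hS := isHermitian_half_smul_add_transpose (J zs)
  have hblocks := hgrad.symm_part_jacobianMatrix (hJ zs).differentiableAt
    (isSymm_hessianMatrix hf2.contDiffAt)
  rw [jacobianMatrix_eq_of_hasFDerivAt hh]
  refine ⟨hh.differentiableAt, hS.im_eq_zero_of_mem_spectrum_map_ofReal, ?_⟩
  rw [hS.forall_spectrum_map_ofReal_re_pos_iff, hJ_eq, hblocks]
  exact posDef_fromBlocks_zero_iff

/-- Theorem 1 of the paper: at a critical point `z*` of the simultaneous-gradient field `ω`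
of the zero-sum game on `f`, all eigenvalues of the Jacobian of the adjusted field `h` are
real, and they are all strictly positive iff `z*` is a differential Nash equilibrium. -/
theorem stmt_4 {dx dy : ℕ}
    (f : ((Fin dx ⊕ Fin dy) → ℝ) → ℝ)
    (hf : ContDiff ℝ 3 f)
    (ω : ((Fin dx ⊕ Fin dy) → ℝ) → ((Fin dx ⊕ Fin dy) → ℝ))
    (hω : ∀ z, (∀ i : Fin dx, ω z (Sum.inl i) = fderiv ℝ f z (Pi.single (Sum.inl i) 1)) ∧
               (∀ j : Fin dy, ω z (Sum.inr j) = -(fderiv ℝ f z (Pi.single (Sum.inr j) 1))))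
    (J : ((Fin dx ⊕ Fin dy) → ℝ) → Matrix (Fin dx ⊕ Fin dy) (Fin dx ⊕ Fin dy) ℝ)
    (hJ : ∀ z, HasFDerivAt ω (LinearMap.toContinuousLinearMap (Matrix.mulVecLin (J z))) z)
    (lam : ((Fin dx ⊕ Fin dy) → ℝ) → ℝ)
    (hlamC1 : ContDiff ℝ 1 lam)
    (hlam_nonneg : ∀ z, 0 ≤ lam z)
    (hlam_zero : ∀ z, lam z = 0 ↔ ω z = 0)
    (hinv : ∀ z, IsUnit ((J z)ᵀ * J z +
      lam z • (1 : Matrix (Fin dx ⊕ Fin dy) (Fin dx ⊕ Fin dy) ℝ)))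
    (h : ((Fin dx ⊕ Fin dy) → ℝ) → ((Fin dx ⊕ Fin dy) → ℝ))
    (hdef : ∀ z, h z = (1 / 2 : ℝ) •
      (ω z + ((J z)ᵀ).mulVec ((((J z)ᵀ * J z +
        lam z • (1 : Matrix (Fin dx ⊕ Fin dy) (Fin dx ⊕ Fin dy) ℝ))⁻¹).mulVec
        (((J z)ᵀ).mulVec (ω z)))))
    (zs : (Fin dx ⊕ Fin dy) → ℝ)
    (hcrit : ω zs = 0)
    (hJinv : IsUnit (J zs)) :
    DifferentiableAt ℝ h zs ∧
    (∀ μ ∈ spectrum ℂ ((jacobianMatrix h zs).map Complex.ofReal), μ.im = 0) ∧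
    ((∀ μ ∈ spectrum ℂ ((jacobianMatrix h zs).map Complex.ofReal), 0 < μ.re) ↔
      (Matrix.PosDef (Matrix.of fun i j : Fin dx =>
          fderiv ℝ (fun z => fderiv ℝ f z (Pi.single (Sum.inl j) 1)) zs
            (Pi.single (Sum.inl i) 1)) ∧
       Matrix.PosDef (-(Matrix.of fun i j : Fin dy =>
          fderiv ℝ (fun z => fderiv ℝ f z (Pi.single (Sum.inr j) 1)) zs
            (Pi.single (Sum.inr i) 1))))) :=
  stmt_4_general f hf ω hω J hJ lam hlamC1 hlam_zero h hdef zs hcrit hJinv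
end

section
/- Let J be the real matrix !![1, 1; -1, -1/10]. Then for every real λ > 0, every eigenvalue of the matrix J + (λ/2)·((J - Jᵀ)ᵀ * J) has strictly positive real part. -/
/-!
A real `2 × 2` matrix with positive trace `t` and determinant `d` has all its complex eigenvalues
in the open right half-plane: they are the roots of `z ^ 2 - t z + d`, a non-real root has real
part `t / 2`, and a real root cannot be `≤ 0` since then `z ^ 2 - t z + d ≥ d > 0`. The
symplectic gradient adjustment Jacobian is `!![1 + λ, 1 + λ / 10; λ - 1, λ - 1 / 10]`, with trace
`9 / 10 + 2 λ` and determinant `9 (1 + λ ^ 2) / 10`.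
-/

open Matrix

theorem Matrix.re_pos_of_mem_spectrum_map_ofReal_fin_two {A : Matrix (Fin 2) (Fin 2) ℝ}
    (htr : 0 < A.trace) (hdet : 0 < A.det) {μ : ℂ} (hμ : μ ∈ spectrum ℂ (A.map Complex.ofReal)) :
    0 < μ.re := by
  rw [mem_spectrum_iff_isRoot_charpoly] at hμ
  change (A.map Complex.ofRealHom).charpoly.IsRoot μ at hμ
  rw [charpoly_map, charpoly_fin_two] at hμ
  exact Complex.re_pos_of_sq_sub_mul_add_eq_zero htr hdet (by simpa using hμ)

/-- Appendix B: the symplectic gradient adjustment converges to the non-Nash equilibrium of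
the counterexample game for every choice of the hyperparameter `λ > 0`. -/
theorem stmt_8 :
    ∀ lam : ℝ, 0 < lam →
      ∀ μ ∈ spectrum ℂ
          ((((!![1, 1; -1, -1/10] : Matrix (Fin 2) (Fin 2) ℝ) +
            (lam / 2) • (((!![1, 1; -1, -1/10] : Matrix (Fin 2) (Fin 2) ℝ) -
                (!![1, 1; -1, -1/10] : Matrix (Fin 2) (Fin 2) ℝ)ᵀ)ᵀ *
              (!![1, 1; -1, -1/10] : Matrix (Fin 2) (Fin 2) ℝ)))).map Complex.ofReal),
        0 < μ.re := by
  intro lam hlam μ hμ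
  have hJ : (!![1, 1; -1, -1/10] : Matrix (Fin 2) (Fin 2) ℝ) +
      (lam / 2) • ((!![1, 1; -1, -1/10] - (!![1, 1; -1, -1/10])ᵀ)ᵀ * !![1, 1; -1, -1/10]) =
      !![1 + lam, 1 + lam / 10; lam - 1, lam - 1 / 10] := by
    ext i j
    fin_cases i <;> fin_cases j <;> simp [Matrix.mul_apply, Fin.sum_univ_two] <;> ring
  rw [hJ] at hμ
  refine re_pos_of_mem_spectrum_map_ofReal_fin_two ?_ ?_ hμ
  · rw [trace_fin_two_of]
    linarith
  · rw [det_fin_two_of]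
    nlinarith
end
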